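/- For an integer p ≥ 1, define b_k = (k + 1 - (p/2)·⌊k/p⌋)·(⌊k/p⌋ + 1). Then for every integer k ≥ p + 2, b_k - 2b_{k-1} + b_{k-2} - b_{k-p} + 2b_{k-p-1} - b_{k-p-2} = 0. -/
import Mathlib


def b (p k : ℕ) : ℚ :=
  ((k : ℚ) + 1 - (p : ℚ) / 2 * ((k / p : ℕ) : ℚ)) * (((k / p : ℕ) : ℚ) + 1)

lemma b_step (p k : ℕ) (hp : 1 ≤ p) (hk : p ≤ k) :
    b p k - b p (k - p) = (k : ℚ) + 1 := by
  have h1 : k / p = (k - p) / p + 1 := Nat.div_eq_sub_div hp hk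
  unfold b
  rw [h1]
  push_cast [hk]
  ring

theorem b_full_recurrence (p : ℕ) (hp : 1 ≤ p) (k : ℕ) (hk : p + 2 ≤ k) :
    b p k - 2 * b p (k - 1) + b p (k - 2)
      - b p (k - p) + 2 * b p (k - p - 1) - b p (k - p - 2) = 0 := by
  have h1 := b_step p k hp (by omega)
  have h2 := b_step p (k - 1) hp (by omega)
  have h3 := b_step p (k - 2) hp (by omega)
  have e1 : k - 1 - p = k - p - 1 := by omega
  have e2 : k - 2 - p = k - p - 2 := by omega
  rw [e1] at h2
  rw [e2] at h3
  push_cast [show 1 ≤ k by omega, show 2 ≤ k by omega] at h2 h3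
  linarith
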